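/- arXiv:1008.0310 — 2 statements merged into one kernel-verified Lean document; each statement's English description precedes it below -/
import Mathlib

section
/- For all integers m ≥ 2 and 0 ≤ i ≤ m−2, the Boros-Moll coefficients satisfy d_i(m) · (4m+2i+7) · d_{i+2}(m) < (4m+2i+3) · d_{i+1}(m)². -/
def bmd (i : ℤ) (m : ℕ) : ℚ :=
  if 0 ≤ i then
    (2 : ℚ) ^ (-(2 * (m : ℤ))) *
      ∑ k ∈ Finset.Icc i.toNat m,
        (2 : ℚ) ^ k * (Nat.choose (2 * m - 2 * k) (m - k)) *
          (Nat.choose (m + k) k) * (Nat.choose k i.toNat)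
  else 0

def bmf (m k l : ℕ) : ℚ :=
  (2 : ℚ) ^ k * (Nat.choose (2 * m - 2 * k) (m - k)) *
    (Nat.choose (m + k) k) * (Nat.choose k l)

def bmg (m k l : ℕ) : ℚ :=
  (k : ℚ) * (2 : ℚ) ^ k * (Nat.choose (2 * (m + 1) - 2 * k) (m + 1 - k)) *
    (Nat.choose (m + k) k) * (Nat.choose k l)

lemma bmd_eq (l m : ℕ) :
    bmd (l : ℤ) m = (2 : ℚ) ^ (-(2 * (m : ℤ))) * ∑ k ∈ Finset.range (m + 1), bmf m k l := by
  rw [bmd, if_pos (Int.natCast_nonneg l)]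
  congr 1
  rw [Int.toNat_natCast]
  apply Finset.sum_subset
  · intro x hx
    simp only [Finset.mem_Icc, Finset.mem_range] at *
    omega
  · intro x hx hnx
    simp only [Finset.mem_Icc, Finset.mem_range] at hx hnx
    have : x < l := by omega
    simp [Nat.choose_eq_zero_of_lt this]

lemma bmd_neg (i : ℤ) (m : ℕ) (h : i < 0) : bmd i m = 0 := by
  rw [bmd, if_neg (by omega)]

lemma bmd_nonneg (i : ℤ) (m : ℕ) : 0 ≤ bmd i m := by
  rw [bmd]
  split
  · apply mul_nonneg (by positivity)
    apply Finset.sum_nonneg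
    intro k hk
    positivity
  · exact le_refl _

lemma bmd_pos (l m : ℕ) (h : l ≤ m) : 0 < bmd (l : ℤ) m := by
  rw [bmd_eq]
  apply mul_pos (by positivity)
  apply Finset.sum_pos'
  · intro k hk
    unfold bmf
    positivity
  · refine ⟨m, by simp, ?_⟩
    unfold bmf
    have h1 : 2 * m - 2 * m = 0 := by omega
    have h2 : m - m = 0 := by omega
    rw [h1, h2]
    have := Nat.choose_pos h
    have := Nat.choose_pos (Nat.le_add_right m m)
    simp only [Nat.choose_self, Nat.choose_zero_right]
    positivity

lemma bmd_zero_of_gt (l m : ℕ) (h : m < l) : bmd (l : ℤ) m = 0 := by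
  rw [bmd, if_pos (Int.natCast_nonneg l), Int.toNat_natCast,
    Finset.Icc_eq_empty (by omega)]
  simp

lemma cbq (j : ℕ) :
    ((j : ℚ) + 1) * ((2 * j + 2).choose (j + 1) : ℚ) = (4 * (j : ℚ) + 2) * ((2 * j).choose j : ℚ) := by
  have h := Nat.succ_mul_centralBinom_succ j
  simp only [Nat.centralBinom, Nat.succ_eq_add_one] at h
  have e : 2 * (j + 1) = 2 * j + 2 := by ring
  rw [e] at h
  have hc := congrArg (Nat.cast (R := ℚ)) h
  push_cast at hc
  linarith

lemma c2q (m k : ℕ) :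
    ((m : ℚ) + 1) * ((m + k + 1).choose k : ℚ) = ((m : ℚ) + k + 1) * ((m + k).choose k : ℚ) := by
  have h1 := Nat.add_one_mul_choose_eq (m + k) k
  have h2 := Nat.choose_succ_right_eq (m + k + 1) k
  have e : m + k + 1 - k = m + 1 := by omega
  rw [e] at h2
  have hc1 := congrArg (Nat.cast (R := ℚ)) h1
  have hc2 := congrArg (Nat.cast (R := ℚ)) h2
  push_cast at hc1 hc2
  linarith

lemma c3q (m k : ℕ) :
    ((k : ℚ) + 1) * ((m + k + 1).choose (k + 1) : ℚ) = ((m : ℚ) + k + 1) * ((m + k).choose k : ℚ) := by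
  have h1 := Nat.add_one_mul_choose_eq (m + k) k
  have hc1 := congrArg (Nat.cast (R := ℚ)) h1
  push_cast at hc1
  linarith

lemma cb2q (m : ℕ) :
    ((m : ℚ) + 1) * ((2 * m + 2).choose (m + 1) : ℚ)
      = (2 * (m : ℚ) + 2) * ((2 * m + 1).choose (m + 1) : ℚ) := by
  have h1 := Nat.add_one_mul_choose_eq (2 * m + 1) m
  have h2 : (2 * m + 1).choose (2 * m + 1 - (m + 1)) = (2 * m + 1).choose (m + 1) :=
    Nat.choose_symm (by omega)
  have e : 2 * m + 1 - (m + 1) = m := by omega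
  rw [e] at h2
  have hc1 := congrArg (Nat.cast (R := ℚ)) h1
  have hc2 := congrArg (Nat.cast (R := ℚ)) h2
  push_cast at hc1 hc2
  have e2 : 2 * m + 1 + 1 = 2 * m + 2 := by ring
  rw [e2, hc2] at hc1
  linarith

-- Pascal, cast
lemma c4q (k n : ℕ) :
    ((k + 1).choose (n + 1) : ℚ) = (k.choose n : ℚ) + (k.choose (n + 1) : ℚ) := by
  have := Nat.choose_succ_succ k n
  exact_mod_cast congrArg (Nat.cast (R := ℚ)) this

lemma c5q (k n : ℕ) :
    ((k.choose (n + 1)) : ℚ) * ((n : ℚ) + 1) = (k.choose n : ℚ) * ((k : ℚ) - n) := by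
  rcases le_or_gt n k with h | h
  · have h1 := Nat.choose_succ_right_eq k n
    have hc := congrArg (Nat.cast (R := ℚ)) h1
    push_cast [Nat.cast_sub h] at hc
    linarith
  · rw [Nat.choose_eq_zero_of_lt (by omega), Nat.choose_eq_zero_of_lt h]
    simp
lemma core1 (j k n : ℕ) :
    ((k : ℚ) + j + 1) *
        ((2:ℚ) ^ k * ((2 * j + 2).choose (j + 1) : ℚ) * ((k + j + 1 + k).choose k : ℚ) *
          (k.choose (n + 1) : ℚ))
      = 4 * ((k : ℚ) + j + (n + 1)) *
          ((2:ℚ) ^ k * ((2 * j).choose j : ℚ) * ((k + j + k).choose k : ℚ) * (k.choose n : ℚ))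
        + 2 * (4 * ((k : ℚ) + j) + 2 * (n + 1) + 3) *
          ((2:ℚ) ^ k * ((2 * j).choose j : ℚ) * ((k + j + k).choose k : ℚ) * (k.choose (n + 1) : ℚ))
        + 2 * ((k : ℚ) * (2:ℚ) ^ k * ((2 * j + 2).choose (j + 1) : ℚ) * ((k + j + k).choose k : ℚ) *
              (k.choose (n + 1) : ℚ)
            - ((k : ℚ) + 1) * (2:ℚ) ^ (k + 1) * ((2 * j).choose j : ℚ) *
              ((k + j + k + 1).choose (k + 1) : ℚ) * ((k + 1).choose (n + 1) : ℚ)) := by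
  have hj : ((j : ℚ) + 1) ≠ 0 := by positivity
  have hkj : ((k : ℚ) + j + 1) ≠ 0 := by positivity
  have hk1 : ((k : ℚ) + 1) ≠ 0 := by positivity
  have hn1 : ((n : ℚ) + 1) ≠ 0 := by positivity
  have f1 : ((2 * j + 2).choose (j + 1) : ℚ)
      = (4 * (j : ℚ) + 2) * ((2 * j).choose j : ℚ) / ((j : ℚ) + 1) := by
    rw [eq_div_iff hj]; linear_combination cbq j
  have f2 : ((k + j + 1 + k).choose k : ℚ)
      = ((k : ℚ) + j + k + 1) * ((k + j + k).choose k : ℚ) / ((k : ℚ) + j + 1) := by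
    rw [eq_div_iff hkj]
    have := c2q (k + j) k
    push_cast at this
    have e : k + j + 1 + k = k + j + k + 1 := by omega
    rw [e]
    linear_combination this
  have f3 : ((k + j + k + 1).choose (k + 1) : ℚ)
      = ((k : ℚ) + j + k + 1) * ((k + j + k).choose k : ℚ) / ((k : ℚ) + 1) := by
    rw [eq_div_iff hk1]
    have := c3q (k + j) k
    push_cast at this
    linear_combination this
  have f5 : (k.choose (n + 1) : ℚ) = (k.choose n : ℚ) * ((k : ℚ) - n) / ((n : ℚ) + 1) := by
    rw [eq_div_iff hn1]; linear_combination c5q k n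
  rw [f1, f2, f3, c4q k n, f5]
  field_simp
  ring

lemma core0 (j k : ℕ) :
    ((k : ℚ) + j + 1) *
        ((2:ℚ) ^ k * ((2 * j + 2).choose (j + 1) : ℚ) * ((k + j + 1 + k).choose k : ℚ) * 1)
      = 2 * (4 * ((k : ℚ) + j) + 3) *
          ((2:ℚ) ^ k * ((2 * j).choose j : ℚ) * ((k + j + k).choose k : ℚ) * 1)
        + 2 * ((k : ℚ) * (2:ℚ) ^ k * ((2 * j + 2).choose (j + 1) : ℚ) * ((k + j + k).choose k : ℚ) * 1
            - ((k : ℚ) + 1) * (2:ℚ) ^ (k + 1) * ((2 * j).choose j : ℚ) *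
              ((k + j + k + 1).choose (k + 1) : ℚ) * 1) := by
  have hj : ((j : ℚ) + 1) ≠ 0 := by positivity
  have hkj : ((k : ℚ) + j + 1) ≠ 0 := by positivity
  have hk1 : ((k : ℚ) + 1) ≠ 0 := by positivity
  have f1 : ((2 * j + 2).choose (j + 1) : ℚ)
      = (4 * (j : ℚ) + 2) * ((2 * j).choose j : ℚ) / ((j : ℚ) + 1) := by
    rw [eq_div_iff hj]; linear_combination cbq j
  have f2 : ((k + j + 1 + k).choose k : ℚ)
      = ((k : ℚ) + j + k + 1) * ((k + j + k).choose k : ℚ) / ((k : ℚ) + j + 1) := by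
    rw [eq_div_iff hkj]
    have := c2q (k + j) k
    push_cast at this
    have e : k + j + 1 + k = k + j + k + 1 := by omega
    rw [e]
    linear_combination this
  have f3 : ((k + j + k + 1).choose (k + 1) : ℚ)
      = ((k : ℚ) + j + k + 1) * ((k + j + k).choose k : ℚ) / ((k : ℚ) + 1) := by
    rw [eq_div_iff hk1]
    have := c3q (k + j) k
    push_cast at this
    linear_combination this
  rw [f1, f2, f3]
  field_simp
  ring

lemma sum_step_succ (m n : ℕ) :
    ((m : ℚ) + 1) * ∑ k ∈ Finset.range (m + 2), bmf (m + 1) k (n + 1)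
      = 4 * ((m : ℚ) + (n + 1)) * (∑ k ∈ Finset.range (m + 1), bmf m k n)
        + 2 * (4 * (m : ℚ) + 2 * (n + 1) + 3) * (∑ k ∈ Finset.range (m + 1), bmf m k (n + 1)) := by
  have tpt : ∀ k ∈ Finset.range (m + 1),
      ((m : ℚ) + 1) * bmf (m + 1) k (n + 1)
        = 4 * ((m : ℚ) + (n + 1)) * bmf m k n
          + 2 * (4 * (m : ℚ) + 2 * (n + 1) + 3) * bmf m k (n + 1)
          + 2 * (bmg m k (n + 1) - bmg m (k + 1) (n + 1)) := by
    intro k hk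
    simp only [Finset.mem_range] at hk
    obtain ⟨j, rfl⟩ : ∃ j, m = k + j := ⟨m - k, by omega⟩
    simp only [bmf, bmg]
    rw [show 2 * (k + j + 1) - 2 * k = 2 * j + 2 by omega,
        show k + j + 1 - k = j + 1 by omega,
        show 2 * (k + j) - 2 * k = 2 * j by omega,
        show k + j - k = j by omega,
        show 2 * (k + j + 1) - 2 * (k + 1) = 2 * j by omega,
        show k + j + 1 - (k + 1) = j by omega,
        show k + j + (k + 1) = k + j + k + 1 by omega]
    push_cast
    linear_combination core1 j k n
  have bd : ((m : ℚ) + 1) * bmf (m + 1) (m + 1) (n + 1) = 2 * bmg m (m + 1) (n + 1) := by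
    simp only [bmf, bmg]
    rw [show 2 * (m + 1) - 2 * (m + 1) = 0 by omega,
        show (m + 1) - (m + 1) = 0 by omega,
        show (m + 1) + (m + 1) = 2 * m + 2 by omega,
        show m + (m + 1) = 2 * m + 1 by omega]
    simp only [Nat.choose_zero_right, Nat.cast_one]
    push_cast
    linear_combination ((2 : ℚ) ^ (m + 1) * ((m + 1).choose (n + 1) : ℚ)) * cb2q m
  have hg0 : bmg m 0 (n + 1) = 0 := by simp [bmg]
  rw [Finset.sum_range_succ, mul_add, Finset.mul_sum, Finset.sum_congr rfl tpt, bd,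
    Finset.sum_add_distrib, Finset.sum_add_distrib, ← Finset.mul_sum, ← Finset.mul_sum,
    ← Finset.mul_sum, Finset.sum_range_sub' (fun k => bmg m k (n + 1)), hg0]
  ring

lemma sum_step_zero (m : ℕ) :
    ((m : ℚ) + 1) * ∑ k ∈ Finset.range (m + 2), bmf (m + 1) k 0
      = 2 * (4 * (m : ℚ) + 3) * (∑ k ∈ Finset.range (m + 1), bmf m k 0) := by
  have tpt : ∀ k ∈ Finset.range (m + 1),
      ((m : ℚ) + 1) * bmf (m + 1) k 0
        = 2 * (4 * (m : ℚ) + 3) * bmf m k 0 + 2 * (bmg m k 0 - bmg m (k + 1) 0) := by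
    intro k hk
    simp only [Finset.mem_range] at hk
    obtain ⟨j, rfl⟩ : ∃ j, m = k + j := ⟨m - k, by omega⟩
    simp only [bmf, bmg]
    rw [show 2 * (k + j + 1) - 2 * k = 2 * j + 2 by omega,
        show k + j + 1 - k = j + 1 by omega,
        show 2 * (k + j) - 2 * k = 2 * j by omega,
        show k + j - k = j by omega,
        show 2 * (k + j + 1) - 2 * (k + 1) = 2 * j by omega,
        show k + j + 1 - (k + 1) = j by omega,
        show k + j + (k + 1) = k + j + k + 1 by omega]
    simp only [Nat.choose_zero_right, Nat.cast_one]
    push_cast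
    linear_combination core0 j k
  have bd : ((m : ℚ) + 1) * bmf (m + 1) (m + 1) 0 = 2 * bmg m (m + 1) 0 := by
    simp only [bmf, bmg]
    rw [show 2 * (m + 1) - 2 * (m + 1) = 0 by omega,
        show (m + 1) - (m + 1) = 0 by omega,
        show (m + 1) + (m + 1) = 2 * m + 2 by omega,
        show m + (m + 1) = 2 * m + 1 by omega]
    simp only [Nat.choose_zero_right, Nat.cast_one]
    push_cast
    linear_combination ((2 : ℚ) ^ (m + 1)) * cb2q m
  have hg0 : bmg m 0 0 = 0 := by simp [bmg]
  rw [Finset.sum_range_succ, mul_add, Finset.mul_sum, Finset.sum_congr rfl tpt, bd,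
    Finset.sum_add_distrib, ← Finset.mul_sum, ← Finset.mul_sum,
    Finset.sum_range_sub' (fun k => bmg m k 0), hg0]
  ring

lemma bmd_rec (m l : ℕ) :
    2 * ((m : ℚ) + 1) * bmd (l : ℤ) (m + 1)
      = 2 * ((m : ℚ) + l) * bmd ((l : ℤ) - 1) m + (4 * (m : ℚ) + 2 * l + 3) * bmd (l : ℤ) m := by
  have hpow : (2 : ℚ) ^ (-(2 * ((m + 1 : ℕ) : ℤ))) = (2 : ℚ) ^ (-(2 * (m : ℤ))) / 4 := by
    rw [show -(2 * ((m + 1 : ℕ) : ℤ)) = -(2 * (m : ℤ)) + (-2) by push_cast; ring,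
      zpow_add₀ (by norm_num : (2 : ℚ) ≠ 0)]
    norm_num
    ring
  cases l with
  | zero =>
    have hneg : bmd (((0 : ℕ) : ℤ) - 1) m = 0 := bmd_neg _ m (by norm_num)
    rw [hneg, bmd_eq 0 (m + 1), bmd_eq 0 m, hpow]
    have hs := sum_step_zero m
    push_cast
    linear_combination ((2 : ℚ) ^ (-(2 * (m : ℤ))) / 2) * hs
  | succ n =>
    have e1 : ((n + 1 : ℕ) : ℤ) = (n : ℤ) + 1 := by push_cast; ring
    rw [e1, show ((n : ℤ) + 1) - 1 = (n : ℤ) by ring]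
    rw [show (n : ℤ) + 1 = ((n + 1 : ℕ) : ℤ) by push_cast; ring]
    rw [bmd_eq (n + 1) (m + 1), bmd_eq n m, bmd_eq (n + 1) m, hpow]
    have hs := sum_step_succ m n
    push_cast
    linear_combination ((2 : ℚ) ^ (-(2 * (m : ℤ))) / 2) * hs

set_option maxHeartbeats 1600000


lemma cert (M I A B C D S0 S1 S2 : ℚ) (hM : 0 ≤ M) (hI : 0 ≤ I)
    (hA : 0 ≤ A) (hB : 0 < B) (hC : 0 < C) (hD : 0 ≤ D)
    (hG1 : 0 ≤ (4*M+2*I+1)*B^2 - (4*M+2*I+5)*(A*C))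
    (hG2 : 0 ≤ (4*M+2*I+3)*C^2 - (4*M+2*I+7)*(B*D))
    (r0 : 2*(M+1)*S0 = 2*(M+I)*A + (4*M+2*I+3)*B)
    (r1 : 2*(M+1)*S1 = 2*(M+I+1)*B + (4*M+2*I+5)*C)
    (r2 : 2*(M+1)*S2 = 2*(M+I+2)*C + (4*M+2*I+7)*D) :
    (4*(M+1)+2*I+7)*(S0*S2) < (4*(M+1)+2*I+3)*S1^2 := by
  have hBC : 0 < B*C := mul_pos hB hC
  have hMI : 0 ≤ M + I := add_nonneg hM hI
  have hMI2 : 0 ≤ M*I := mul_nonneg hM hI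
  have hM2 : 0 ≤ M*M := mul_nonneg hM hM
  have hI2 : 0 ≤ I*I := mul_nonneg hI hI
  have hT : 0 < (4*M+2*I+7)*(2*(M+I+1)*B+(4*M+2*I+5)*C)^2
      - (4*M+2*I+11)*((2*(M+I)*A+(4*M+2*I+3)*B)*(2*(M+I+2)*C+(4*M+2*I+7)*D)) := by
    have c1 : 0 < 4*(40*M^2+64*M*I+28*I^2+96*M+72*I+35) := by linarith
    have c2 : 0 < 4*(48*M^2+88*M*I+32*I^2+44*M+60*I+10) := by linarith
    have c3 : 0 < (4*M+2*I+5)*(80*M+40*I+76) := by linarith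
    have hPhi : 0 < (4*(40*M^2+64*M*I+28*I^2+96*M+72*I+35))*B^2
        + (4*(48*M^2+88*M*I+32*I^2+44*M+60*I+10))*(B*C)
        + ((4*M+2*I+5)*(80*M+40*I+76))*C^2 := by
      have := mul_pos c1 (pow_pos hB 2)
      have := mul_pos c2 hBC
      have := mul_pos c3 (pow_pos hC 2)
      linarith
    have ht1 : 0 ≤ 2*(M+I)*(4*M+2*I+11)*((4*M+2*I+1)*B^2-(4*M+2*I+5)*(A*C))
        *(C*(2*(M+I+2)*B+(4*M+2*I+3)*C)) := by
      apply mul_nonneg (mul_nonneg (by linarith) hG1)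
      apply mul_nonneg hC.le
      have h1 : 0 ≤ 2*(M+I+2)*B := mul_nonneg (by linarith) hB.le
      have h2 : 0 ≤ (4*M+2*I+3)*C := mul_nonneg (by linarith) hC.le
      linarith
    have ht2 : 0 ≤ (4*M+2*I+5)*(4*M+2*I+11)*((4*M+2*I+3)*C^2-(4*M+2*I+7)*(B*D))
        *(C*(2*(M+I)*A+(4*M+2*I+3)*B)) := by
      apply mul_nonneg (mul_nonneg (by linarith) hG2)
      apply mul_nonneg hC.le
      have h1 : 0 ≤ 2*(M+I)*A := mul_nonneg (by linarith) hA
      have h2 : 0 ≤ (4*M+2*I+3)*B := mul_nonneg (by linarith) hB.le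
      linarith
    have idT : (4*M+2*I+5)*(B*C)*((4*M+2*I+7)*(2*(M+I+1)*B+(4*M+2*I+5)*C)^2
        - (4*M+2*I+11)*((2*(M+I)*A+(4*M+2*I+3)*B)*(2*(M+I+2)*C+(4*M+2*I+7)*D)))
      = B*C*((4*(40*M^2+64*M*I+28*I^2+96*M+72*I+35))*B^2
        + (4*(48*M^2+88*M*I+32*I^2+44*M+60*I+10))*(B*C)
        + ((4*M+2*I+5)*(80*M+40*I+76))*C^2)
        + 2*(M+I)*(4*M+2*I+11)*((4*M+2*I+1)*B^2-(4*M+2*I+5)*(A*C))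
          *(C*(2*(M+I+2)*B+(4*M+2*I+3)*C))
        + (4*M+2*I+5)*(4*M+2*I+11)*((4*M+2*I+3)*C^2-(4*M+2*I+7)*(B*D))
          *(C*(2*(M+I)*A+(4*M+2*I+3)*B)) := by ring
    have hKT : 0 < (4*M+2*I+5)*(B*C)*((4*M+2*I+7)*(2*(M+I+1)*B+(4*M+2*I+5)*C)^2
        - (4*M+2*I+11)*((2*(M+I)*A+(4*M+2*I+3)*B)*(2*(M+I+2)*C+(4*M+2*I+7)*D))) := by
      rw [idT]
      have := mul_pos hBC hPhi
      linarith
    have hK : 0 < (4*M+2*I+5)*(B*C) := mul_pos (by linarith) hBC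
    rcases mul_pos_iff.mp hKT with ⟨_, h⟩ | ⟨h, _⟩
    · exact h
    · linarith
  have e : 4*(M+1)^2*((4*(M+1)+2*I+3)*S1^2 - (4*(M+1)+2*I+7)*(S0*S2))
      = (4*M+2*I+7)*(2*(M+I+1)*B+(4*M+2*I+5)*C)^2
        - (4*M+2*I+11)*((2*(M+I)*A+(4*M+2*I+3)*B)*(2*(M+I+2)*C+(4*M+2*I+7)*D)) := by
    linear_combination ((4*M+2*I+7)*(2*(M+1)*S1 + (2*(M+I+1)*B+(4*M+2*I+5)*C)))*r1
      - ((4*M+2*I+11)*(2*(M+1)*S2))*r0 - ((4*M+2*I+11)*(2*(M+I)*A+(4*M+2*I+3)*B))*r2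
  rw [← e] at hT
  have h4 : 0 < 4*(M+1)^2 := by positivity
  rcases mul_pos_iff.mp hT with ⟨_, h⟩ | ⟨h, _⟩
  · linarith
  · linarith

lemma key : ∀ m : ℕ, ∀ i : ℕ, i + 1 ≤ m →
    (4*(m:ℚ)+2*(i:ℚ)+7) * (bmd (i:ℤ) m * bmd ((i:ℤ)+2) m)
      < (4*(m:ℚ)+2*(i:ℚ)+3) * bmd ((i:ℤ)+1) m ^ 2 := by
  intro m
  induction m with
  | zero => intro i hi; omega
  | succ m IH =>
    intro i hi
    rcases Nat.lt_or_ge i m with hlt | hge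
    · -- main case : i + 1 ≤ m
      have hi' : i + 1 ≤ m := by omega
      -- positivity facts
      have hA : 0 ≤ bmd ((i:ℤ)-1) m := bmd_nonneg _ _
      have hB : 0 < bmd (i:ℤ) m := bmd_pos i m (by omega)
      have hC : 0 < bmd ((i:ℤ)+1) m := by
        have := bmd_pos (i+1) m (by omega)
        push_cast at this
        exact this
      have hD : 0 ≤ bmd ((i:ℤ)+2) m := bmd_nonneg _ _
      -- G2 from IH at i
      have hIH := IH i hi'
      have hG2 : 0 ≤ (4*(m:ℚ)+2*(i:ℚ)+3)*(bmd ((i:ℤ)+1) m)^2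
          - (4*(m:ℚ)+2*(i:ℚ)+7)*(bmd (i:ℤ) m * bmd ((i:ℤ)+2) m) := by linarith
      -- G1
      have hG1 : 0 ≤ (4*(m:ℚ)+2*(i:ℚ)+1)*(bmd (i:ℤ) m)^2
          - (4*(m:ℚ)+2*(i:ℚ)+5)*(bmd ((i:ℤ)-1) m * bmd ((i:ℤ)+1) m) := by
        rcases Nat.eq_zero_or_pos i with h0 | hpos
        · subst h0
          have hz : bmd (((0:ℕ):ℤ)-1) m = 0 := bmd_neg _ m (by norm_num)
          rw [hz]
          have : 0 ≤ (4*(m:ℚ)+2*((0:ℕ):ℚ)+1)*(bmd ((0:ℕ):ℤ) m)^2 := by positivity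
          linarith
        · obtain ⟨i', rfl⟩ : ∃ i', i = i' + 1 := ⟨i - 1, by omega⟩
          have h := IH i' (by omega)
          push_cast at h ⊢
          rw [show (i':ℤ)+1-1 = (i':ℤ) by ring, show (i':ℤ)+1+1 = (i':ℤ)+2 by ring]
          linarith
      -- recurrences
      have r0 : 2*((m:ℚ)+1)*bmd (i:ℤ) (m+1)
          = 2*((m:ℚ)+(i:ℚ))*bmd ((i:ℤ)-1) m + (4*(m:ℚ)+2*(i:ℚ)+3)*bmd (i:ℤ) m := by
        have := bmd_rec m i
        linear_combination this
      have r1 : 2*((m:ℚ)+1)*bmd ((i:ℤ)+1) (m+1)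
          = 2*((m:ℚ)+(i:ℚ)+1)*bmd (i:ℤ) m + (4*(m:ℚ)+2*(i:ℚ)+5)*bmd ((i:ℤ)+1) m := by
        have h := bmd_rec m (i+1)
        push_cast at h
        rw [show (i:ℤ)+1-1 = (i:ℤ) by ring] at h
        linear_combination h
      have r2 : 2*((m:ℚ)+1)*bmd ((i:ℤ)+2) (m+1)
          = 2*((m:ℚ)+(i:ℚ)+2)*bmd ((i:ℤ)+1) m + (4*(m:ℚ)+2*(i:ℚ)+7)*bmd ((i:ℤ)+2) m := by
        have h := bmd_rec m (i+2)
        push_cast at h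
        rw [show (i:ℤ)+2-1 = (i:ℤ)+1 by ring] at h
        linear_combination h
      have hc := cert (m:ℚ) (i:ℚ) (bmd ((i:ℤ)-1) m) (bmd (i:ℤ) m) (bmd ((i:ℤ)+1) m)
        (bmd ((i:ℤ)+2) m) (bmd (i:ℤ) (m+1)) (bmd ((i:ℤ)+1) (m+1)) (bmd ((i:ℤ)+2) (m+1))
        (Nat.cast_nonneg m) (Nat.cast_nonneg i) hA hB hC hD hG1 hG2 r0 r1 r2
      push_cast
      linarith
    · -- boundary case : i = m
      have him : i = m := by omega
      subst him
      have h0 : bmd ((i:ℤ)+2) (i+1) = 0 := by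
        have := bmd_zero_of_gt (i+2) (i+1) (by omega)
        push_cast at this
        exact this
      have h1 : 0 < bmd ((i:ℤ)+1) (i+1) := by
        have := bmd_pos (i+1) (i+1) le_rfl
        push_cast at this
        exact this
      rw [h0, mul_zero, mul_zero]
      have : 0 < (4*((i:ℚ)+1)+2*(i:ℚ)+3) * bmd ((i:ℤ)+1) (i+1)^2 := by positivity
      push_cast
      linarith

theorem bmd_strong_logconcave (m : ℕ) (hm : 2 ≤ m) (i : ℕ) (hi : i ≤ m - 2) :
    bmd i m * (4 * (m : ℚ) + 2 * (i : ℚ) + 7) * bmd (i + 2) m <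
      (4 * (m : ℚ) + 2 * (i : ℚ) + 3) * bmd (i + 1) m ^ 2 := by
  have h := key m i (by omega)
  have e : bmd (i:ℤ) m * (4 * (m : ℚ) + 2 * (i : ℚ) + 7) * bmd ((i:ℤ) + 2) m
      = (4*(m:ℚ)+2*(i:ℚ)+7) * (bmd (i:ℤ) m * bmd ((i:ℤ)+2) m) := by ring
  rw [e]
  exact h
end

section
/- For all integers m ≥ 2 and 1 ≤ i ≤ m, the Boros-Moll coefficients satisfy d_i(m) · d_i(m+1) > d_{i-1}(m) · d_{i+1}(m+1). -/
open Finset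

def cq (k m : ℕ) : ℚ :=
  if k ≤ m then 2^k * ((2*m-2*k).choose (m-k)) * ((m+k).choose k) else 0

def Sb (i m : ℕ) : ℚ := ∑ k ∈ Finset.Icc i m, cq k m * (k.choose i : ℚ)

lemma cq_of_le {k m : ℕ} (h : k ≤ m) :
    cq k m = 2^k * ((2*m-2*k).choose (m-k)) * ((m+k).choose k) := if_pos h

lemma cq_of_gt {k m : ℕ} (h : m < k) : cq k m = 0 := if_neg (by omega)

lemma cq_pos {k m : ℕ} (h : k ≤ m) : 0 < cq k m := by
  rw [cq_of_le h]
  have h1 : 0 < ((2*m-2*k).choose (m-k)) := Nat.choose_pos (by omega)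
  have h2 : 0 < ((m+k).choose k) := Nat.choose_pos (by omega)
  have h1' : (0:ℚ) < ((2*m-2*k).choose (m-k) : ℚ) := by exact_mod_cast h1
  have h2' : (0:ℚ) < ((m+k).choose k : ℚ) := by exact_mod_cast h2
  positivity

-- central binomial identity in ℚ
lemma f1q (n : ℕ) : ((n:ℚ)+1) * ((2*n+2).choose (n+1) : ℚ)
    = 2*(2*(n:ℚ)+1) * ((2*n).choose n : ℚ) := by
  have := Nat.succ_mul_centralBinom_succ n
  simp only [Nat.centralBinom] at this
  have h2 : 2*(n+1) = 2*n+2 := by ring_nf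
  rw [h2] at this
  exact_mod_cast this

lemma key1 (m j : ℕ) (hk : j + 1 ≤ m + 1) :
    ((m:ℚ)+1) * cq (j+1) (m+1)
      = 2*((2*(m:ℚ)+1) - 2*((j:ℚ)+1)) * cq (j+1) m + 4*((m:ℚ)+((j:ℚ)+1)) * cq j m := by
  rcases Nat.lt_or_ge j m with hj | hj
  · -- j+1 ≤ m
    obtain ⟨n, rfl⟩ : ∃ n, m = n + j + 1 := ⟨m - j - 1, by omega⟩
    rw [cq_of_le (show j+1 ≤ (n+j+1)+1 by omega),
        cq_of_le (show j+1 ≤ n+j+1 by omega),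
        cq_of_le (show j ≤ n+j+1 by omega)]
    simp only [show 2*((n+j+1)+1) - 2*(j+1) = 2*n+2 from by omega,
      show ((n+j+1)+1) - (j+1) = n+1 from by omega,
      show 2*(n+j+1) - 2*(j+1) = 2*n from by omega,
      show (n+j+1) - (j+1) = n from by omega,
      show 2*(n+j+1) - 2*j = 2*n+2 from by omega,
      show (n+j+1) - j = n+1 from by omega,
      show ((n+j+1)+1) + (j+1) = n+2*j+3 from by omega,
      show (n+j+1) + (j+1) = n+2*j+2 from by omega,
      show (n+j+1) + j = n+2*j+1 from by omega]
    have hf1 := f1q n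
    have f2 : (n+2*j+2) * ((n+2*j+1).choose j) = ((n+2*j+2).choose (j+1)) * (j+1) := by
      have := Nat.add_one_mul_choose_eq (n+2*j+1) j
      simpa using this
    have f3 : ((n+2*j+2).choose (j+1)) * ((n+2*j+2)+1)
        = (((n+2*j+2)+1).choose (j+1)) * (((n+2*j+2)+1) - (j+1)) :=
      Nat.choose_mul_succ_eq (n+2*j+2) (j+1)
    simp only [show ((n+2*j+2)+1) - (j+1) = n+j+2 from by omega,
      show (n+2*j+2)+1 = n+2*j+3 from by omega] at f3
    have f2' : ((n:ℚ)+2*j+2) * (((n+2*j+1).choose j : ℕ) : ℚ)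
        = (((n+2*j+2).choose (j+1) : ℕ) : ℚ) * ((j:ℚ)+1) := by exact_mod_cast f2
    have f3' : (((n+2*j+2).choose (j+1) : ℕ) : ℚ) * ((n:ℚ)+2*j+3)
        = (((n+2*j+3).choose (j+1) : ℕ) : ℚ) * ((n:ℚ)+j+2) := by exact_mod_cast f3
    push_cast
    linear_combination (2*(2:ℚ)^j * (((n+2*j+2).choose (j+1) : ℕ) : ℚ)) * hf1
      - (4*(2:ℚ)^j * (((2*n+2).choose (n+1) : ℕ) : ℚ)) * f2'
      - (2*(2:ℚ)^j * (((2*n+2).choose (n+1) : ℕ) : ℚ)) * f3'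
  · -- j = m
    have hjm : j = m := by omega
    subst hjm
    rw [cq_of_le (show j+1 ≤ j+1 from le_refl _),
        cq_of_gt (show j < j+1 by omega),
        cq_of_le (show j ≤ j from le_refl _)]
    simp only [show 2*(j+1) - 2*(j+1) = 0 from by omega,
      show (j+1) - (j+1) = 0 from by omega,
      show 2*j - 2*j = 0 from by omega,
      show j - j = 0 from by omega,
      show (j+1) + (j+1) = 2*j+2 from by omega,
      show j + j = 2*j from by omega,
      Nat.choose_self, Nat.choose_zero_right]
    have hf1 := f1q j
    push_cast
    linear_combination (2*(2:ℚ)^j) * hf1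

lemma key0 (m : ℕ) : ((m:ℚ)+1) * cq 0 (m+1) = 2*(2*(m:ℚ)+1) * cq 0 m := by
  rw [cq_of_le (show 0 ≤ m+1 by omega), cq_of_le (show 0 ≤ m by omega)]
  simp only [show 2*(m+1) - 2*0 = 2*m+2 from by omega,
    show (m+1) - 0 = m+1 from by omega,
    show 2*m - 2*0 = 2*m from by omega,
    show m - 0 = m from by omega,
    Nat.add_zero, Nat.choose_zero_right, pow_zero]
  have hf1 := f1q m
  push_cast at hf1 ⊢
  linarith [hf1]

lemma Icc_succ_left' (a b : ℕ) : Icc (a+1) b = Ioc a b := by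
  ext x; simp [Finset.mem_Icc, Finset.mem_Ioc]

lemma sum_shift (a b : ℕ) (f : ℕ → ℚ) :
    ∑ j ∈ Icc a b, f (j+1) = ∑ k ∈ Icc (a+1) (b+1), f k := by
  rw [← Finset.map_add_right_Icc a b 1, Finset.sum_map]
  simp [addRightEmbedding]

lemma sum_bot (a b : ℕ) (f : ℕ → ℚ) (h : f a = 0) :
    ∑ j ∈ Icc (a+1) b, f j = ∑ j ∈ Icc a b, f j := by
  rw [Icc_succ_left' a b, ← Finset.Icc_erase_left, Finset.sum_erase _ h]

lemma Icc_bot_split (b : ℕ) (f : ℕ → ℚ) :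
    ∑ k ∈ Icc 0 b, f k = f 0 + ∑ k ∈ Icc 1 b, f k := by
  rw [Icc_succ_left' 0 b, ← Finset.Icc_erase_left,
    Finset.add_sum_erase _ f (by simp : 0 ∈ Icc 0 b)]

lemma SbRec (m i : ℕ) (hi : i ≤ m) :
    ((m:ℚ)+1) * Sb (i+1) (m+1)
      = 4*((m:ℚ)+(i:ℚ)+1) * Sb i m + 2*(4*(m:ℚ)+2*(i:ℚ)+5) * Sb (i+1) m := by
  unfold Sb
  rw [Finset.mul_sum, ← sum_shift i m
    (fun k => ((m:ℚ)+1) * (cq k (m+1) * (k.choose (i+1) : ℚ)))]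
  have hstep : ∀ j ∈ Icc i m,
      ((m:ℚ)+1) * (cq (j+1) (m+1) * ((j+1).choose (i+1) : ℚ))
      = (fun k : ℕ => 2*((2*(m:ℚ)+1) - 2*(k:ℚ)) * cq k m * (k.choose (i+1) : ℚ)) (j+1)
        + 4*((m:ℚ)+(j:ℚ)+1) * cq j m * (j.choose i : ℚ)
        + 4*((m:ℚ)+(j:ℚ)+1) * cq j m * (j.choose (i+1) : ℚ) := by
    intro j hj
    have hjm := (Finset.mem_Icc.mp hj).2
    have hkey := key1 m j (by omega)
    have hpas : (((j+1).choose (i+1) : ℕ) : ℚ) = (j.choose i : ℚ) + (j.choose (i+1) : ℚ) := by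
      exact_mod_cast Nat.choose_succ_succ j i
    simp only []
    push_cast
    linear_combination (((j+1).choose (i+1) : ℕ) : ℚ) * hkey
      + (4*((m:ℚ)+(j:ℚ)+1) * cq j m) * hpas
  rw [Finset.sum_congr rfl hstep, Finset.sum_add_distrib, Finset.sum_add_distrib]
  rw [sum_shift i m (fun k : ℕ => 2*((2*(m:ℚ)+1) - 2*(k:ℚ)) * cq k m * (k.choose (i+1) : ℚ))]
  rw [Finset.sum_Icc_succ_top (show i+1 ≤ m+1 by omega)]
  rw [cq_of_gt (show m < m+1 by omega)]
  rw [sum_bot i m (fun k : ℕ => 2*((2*(m:ℚ)+1) - 2*(k:ℚ)) * cq k m * (k.choose (i+1) : ℚ))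
    (by simp [Nat.choose_succ_self])]
  have hS2 : ∑ k ∈ Icc (i+1) m, cq k m * (k.choose (i+1) : ℚ)
      = ∑ k ∈ Icc i m, cq k m * (k.choose (i+1) : ℚ) :=
    sum_bot i m (fun k : ℕ => cq k m * (k.choose (i+1) : ℚ)) (by simp [Nat.choose_succ_self])
  rw [hS2, Finset.mul_sum, Finset.mul_sum, mul_zero, zero_mul, add_zero,
    ← Finset.sum_add_distrib, ← Finset.sum_add_distrib, ← Finset.sum_add_distrib]
  apply Finset.sum_congr rfl
  intro k hk
  have hik : i ≤ k := (Finset.mem_Icc.mp hk).1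
  have hc : ((k.choose (i+1) : ℕ) : ℚ) * ((i:ℚ)+1) = (k.choose i : ℚ) * ((k:ℚ) - i) := by
    have h0 := Nat.choose_succ_right_eq k i
    have h' : ((k.choose (i+1) * (i+1) : ℕ) : ℚ) = ((k.choose i * (k - i) : ℕ) : ℚ) := by
      exact_mod_cast congrArg (Nat.cast (R := ℚ)) h0
    push_cast [Nat.cast_sub hik] at h'
    linarith [h']
  linear_combination (-4 : ℚ) * cq k m * hc

lemma SbRec0 (m : ℕ) :
    ((m:ℚ)+1) * Sb 0 (m+1) = 2*(4*(m:ℚ)+3) * Sb 0 m := by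
  unfold Sb
  simp only [Nat.choose_zero_right, Nat.cast_one, mul_one]
  rw [Finset.mul_sum, Icc_bot_split (m+1) (fun k => ((m:ℚ)+1) * cq k (m+1))]
  rw [show ∑ k ∈ Icc 1 (m+1), ((m:ℚ)+1) * cq k (m+1)
      = ∑ j ∈ Icc 0 m, ((m:ℚ)+1) * cq (j+1) (m+1) from
      (sum_shift 0 m (fun k => ((m:ℚ)+1) * cq k (m+1))).symm]
  have hstep : ∀ j ∈ Icc 0 m,
      ((m:ℚ)+1) * cq (j+1) (m+1)
      = (fun k : ℕ => 2*((2*(m:ℚ)+1) - 2*(k:ℚ)) * cq k m) (j+1) + 4*((m:ℚ)+(j:ℚ)+1) * cq j m := by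
    intro j hj
    have hjm := (Finset.mem_Icc.mp hj).2
    have hkey := key1 m j (by omega)
    simp only []
    push_cast
    linear_combination hkey
  rw [Finset.sum_congr rfl hstep, Finset.sum_add_distrib]
  rw [sum_shift 0 m (fun k : ℕ => 2*((2*(m:ℚ)+1) - 2*(k:ℚ)) * cq k m)]
  rw [Finset.sum_Icc_succ_top (show 0+1 ≤ m+1 by omega)]
  rw [cq_of_gt (show m < m+1 by omega), mul_zero, add_zero]
  rw [show (0:ℕ)+1 = 1 from rfl]
  rw [show ∑ k ∈ Icc 1 m, 2*((2*(m:ℚ)+1) - 2*(k:ℚ)) * cq k m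
      = (∑ k ∈ Icc 0 m, 2*((2*(m:ℚ)+1) - 2*(k:ℚ)) * cq k m) - 2*(2*(m:ℚ)+1) * cq 0 m from by
    rw [Icc_bot_split m (fun k : ℕ => 2*((2*(m:ℚ)+1) - 2*(k:ℚ)) * cq k m)]; push_cast; ring]
  rw [key0 m]
  rw [show ∀ A B c : ℚ, c + (A - c + B) = A + B from fun _ _ _ => by ring]
  rw [Finset.mul_sum, ← Finset.sum_add_distrib]
  apply Finset.sum_congr rfl
  intro k hk
  push_cast
  ring

lemma Sb_zero {i m : ℕ} (h : m < i) : Sb i m = 0 := by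
  unfold Sb
  rw [Finset.Icc_eq_empty (by omega)]
  simp

lemma Sb_pos {i m : ℕ} (h : i ≤ m) : 0 < Sb i m := by
  unfold Sb
  apply Finset.sum_pos
  · intro k hk
    have hk' := Finset.mem_Icc.mp hk
    have h1 : (0:ℚ) < (k.choose i : ℚ) := by
      exact_mod_cast Nat.choose_pos hk'.1
    exact mul_pos (cq_pos hk'.2) h1
  · exact ⟨i, Finset.mem_Icc.mpr ⟨le_refl i, h⟩⟩

lemma Sb_nonneg (i m : ℕ) : 0 ≤ Sb i m := by
  rcases le_or_gt i m with h | h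
  · exact le_of_lt (Sb_pos h)
  · rw [Sb_zero h]

lemma bounds : ∀ m : ℕ, ∀ j : ℕ, j + 1 ≤ m →
    2*((m:ℚ)-(j:ℚ)) * Sb j m ≤ (2*(j:ℚ)+3) * Sb (j+1) m ∧
    ((j:ℚ)+1) * Sb (j+1) m ≤ ((m:ℚ)-(j:ℚ)) * Sb j m := by
  intro m
  induction m with
  | zero => intro j hj; exact absurd hj (by omega)
  | succ n ih =>
    intro j hj
    have hpos : (0:ℚ) < (n:ℚ)+1 := by positivity
    by_cases hn0 : n = 0
    · -- base m = 1, j = 0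
      subst hn0
      have hj0 : j = 0 := by omega
      subst hj0
      have hS00 : Sb 0 0 = 1 := by norm_num [Sb, cq]
      have hS10 : Sb 1 0 = 0 := Sb_zero (by omega)
      have hE0 := SbRec0 0
      have hE1 := SbRec 0 0 (le_refl 0)
      push_cast at hE0 hE1 ⊢
      rw [hS00] at hE0
      rw [hS00, hS10] at hE1
      constructor <;> nlinarith [hE0, hE1]
    · have hn : 1 ≤ n := by omega
      have hjn : j ≤ n := by omega
      by_cases hjtop : j = n
      · -- top case j = n
        subst hjtop
        obtain ⟨p, rfl⟩ : ∃ p, j = p+1 := ⟨j-1, by omega⟩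
        have hE2 := SbRec (p+1) (p+1) (le_refl (p+1))
        have hE1 := SbRec (p+1) p (by omega)
        have htop : Sb (p+1+1) (p+1) = 0 := Sb_zero (by omega)
        obtain ⟨hLih, hUih⟩ := ih p (by omega)
        have hposN : 0 < Sb (p+1) (p+1) := Sb_pos (le_refl (p+1))
        have hposP : 0 < Sb p (p+1) := Sb_pos (by omega)
        rw [htop] at hE2
        have hE1s : (2:ℚ) * ((((p:ℚ)+1)+1) * Sb (p+1) (p+1+1))
            = 2 * (4*(((p:ℚ)+1)+(p:ℚ)+1) * Sb p (p+1)
                + 2*(4*((p:ℚ)+1)+2*(p:ℚ)+5) * Sb (p+1) (p+1)) := by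
          push_cast at hE1 ⊢
          linear_combination (2:ℚ) * hE1
        have hE2sL : (2*((p:ℚ)+1)+3) * ((((p:ℚ)+1)+1) * Sb (p+1+1) (p+1+1))
            = (2*((p:ℚ)+1)+3) * (4*(((p:ℚ)+1)+((p:ℚ)+1)+1) * Sb (p+1) (p+1)) := by
          push_cast at hE2 ⊢
          linear_combination (2*((p:ℚ)+1)+3) * hE2
        have hE2sU : ((((p:ℚ)+1)+1)) * ((((p:ℚ)+1)+1) * Sb (p+1+1) (p+1+1))
            = (((p:ℚ)+1)+1) * (4*(((p:ℚ)+1)+((p:ℚ)+1)+1) * Sb (p+1) (p+1)) := by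
          push_cast at hE2 ⊢
          linear_combination (((p:ℚ)+1)+1) * hE2
        have hLs := mul_le_mul_of_nonneg_left hLih
          (show (0:ℚ) ≤ 4*(((p:ℚ)+1)+(p:ℚ)+1) by positivity)
        have hUs := mul_le_mul_of_nonneg_left hUih
          (show (0:ℚ) ≤ 4*(((p:ℚ)+1)+(p:ℚ)+1) by positivity)
        constructor
        · apply le_of_mul_le_mul_left ?_ (show (0:ℚ) < ((p:ℚ)+1)+1 by positivity)
          push_cast at hE1s hE2sL hLs ⊢
          linarith [hE1s, hE2sL, hLs, hposN.le, hposP.le]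
        · apply le_of_mul_le_mul_left ?_ (show (0:ℚ) < ((p:ℚ)+1)+1 by positivity)
          push_cast at hE1s hE2sU hUs ⊢
          linarith [hE1s, hE2sU, hUs, hposN.le, hposP.le]
      · have hjn' : j + 1 ≤ n := by omega
        by_cases hj0 : j = 0
        · -- case j = 0
          subst hj0
          have hE0 := SbRec0 n
          have hE1 := SbRec n 0 (by omega)
          obtain ⟨hLih, hUih⟩ := ih 0 (by omega)
          have hpos0 : 0 < Sb 0 n := Sb_pos (by omega)
          have hE0sL : (2*((n:ℚ)+1)) * (((n:ℚ)+1) * Sb 0 (n+1))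
              = (2*((n:ℚ)+1)) * (2*(4*(n:ℚ)+3) * Sb 0 n) := by rw [hE0]
          have hE0sU : ((n:ℚ)+1) * (((n:ℚ)+1) * Sb 0 (n+1))
              = ((n:ℚ)+1) * (2*(4*(n:ℚ)+3) * Sb 0 n) := by rw [hE0]
          have hLs := mul_le_mul_of_nonneg_left hLih
            (show (0:ℚ) ≤ 2*(4*(n:ℚ)+5) by positivity)
          have hUs := mul_le_mul_of_nonneg_left hUih
            (show (0:ℚ) ≤ 2*(4*(n:ℚ)+5) by positivity)
          have hnq : (0:ℚ) ≤ (n:ℚ) := Nat.cast_nonneg n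
          constructor
          · apply le_of_mul_le_mul_left ?_ hpos
            push_cast at hE0sL hE1 hLs ⊢
            linarith [hE0sL, hE1, hLs, mul_nonneg hnq hpos0.le]
          · apply le_of_mul_le_mul_left ?_ hpos
            push_cast at hE0sU hE1 hUs ⊢
            linarith [hE0sU, hE1, hUs, hpos0.le]
        · -- general case 1 ≤ j, j+1 ≤ n
          obtain ⟨p, rfl⟩ : ∃ p, j = p+1 := ⟨j-1, by omega⟩
          have hE1 := SbRec n p (by omega)      -- (n+1) Sb (p+1) (n+1)
          have hE2 := SbRec n (p+1) (by omega)  -- (n+1) Sb (p+2) (n+1)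
          obtain ⟨hLp, hUp⟩ := ih p (by omega)
          obtain ⟨hLp1, hUp1⟩ := ih (p+1) (by omega)
          have hposP1 : 0 < Sb (p+1) n := Sb_pos (by omega)
          have hposP : 0 < Sb p n := Sb_pos (by omega)
          -- scaled equalities
          have hE1sL : (2*((n:ℚ)-(p:ℚ))) * (((n:ℚ)+1) * Sb (p+1) (n+1))
              = (2*((n:ℚ)-(p:ℚ))) * (4*((n:ℚ)+(p:ℚ)+1) * Sb p n
                  + 2*(4*(n:ℚ)+2*(p:ℚ)+5) * Sb (p+1) n) := by rw [hE1]
          have hE2sL : (2*((p:ℚ)+1)+3) * (((n:ℚ)+1) * Sb (p+2) (n+1))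
              = (2*((p:ℚ)+1)+3) * (4*((n:ℚ)+((p:ℚ)+1)+1) * Sb (p+1) n
                  + 2*(4*(n:ℚ)+2*((p:ℚ)+1)+5) * Sb (p+2) n) := by
            rw [hE2]; push_cast; ring
          have hE1sU : ((n:ℚ)-(p:ℚ)) * (((n:ℚ)+1) * Sb (p+1) (n+1))
              = ((n:ℚ)-(p:ℚ)) * (4*((n:ℚ)+(p:ℚ)+1) * Sb p n
                  + 2*(4*(n:ℚ)+2*(p:ℚ)+5) * Sb (p+1) n) := by rw [hE1]
          have hE2sU : ((p:ℚ)+2) * (((n:ℚ)+1) * Sb (p+2) (n+1))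
              = ((p:ℚ)+2) * (4*((n:ℚ)+((p:ℚ)+1)+1) * Sb (p+1) n
                  + 2*(4*(n:ℚ)+2*((p:ℚ)+1)+5) * Sb (p+2) n) := by
            rw [hE2]; push_cast; ring
          -- scaled IHs
          have c1 : (0:ℚ) ≤ 4*((n:ℚ)+(p:ℚ)+1) := by positivity
          have c2 : (0:ℚ) ≤ 2*(4*(n:ℚ)+2*(p:ℚ)+7) := by positivity
          have hLps := mul_le_mul_of_nonneg_left hLp c1
          have hLp1s := mul_le_mul_of_nonneg_left hLp1 c2
          have hUps := mul_le_mul_of_nonneg_left hUp c1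
          have hUp1s := mul_le_mul_of_nonneg_left hUp1 c2
          constructor
          · apply le_of_mul_le_mul_left ?_ hpos
            push_cast at hE1sL hE2sL hLps hLp1s ⊢
            linarith [hE1sL, hE2sL, hLps, hLp1s, hposP1.le, hposP.le]
          · apply le_of_mul_le_mul_left ?_ hpos
            push_cast at hE1sU hE2sU hUps hUp1s ⊢
            linarith [hE1sU, hE2sU, hUps, hUp1s, hposP1.le, hposP.le]

lemma Qlem (m j : ℕ) (hj : j + 1 ≤ m) :
    (4*(m:ℚ)+2*(j:ℚ)+5) * Sb (j+1) m ^ 2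
      > 2 * Sb j m * Sb (j+1) m + (4*(m:ℚ)+2*(j:ℚ)+7) * Sb j m * Sb (j+2) m := by
  have hp1 : 0 < Sb (j+1) m := Sb_pos hj
  have hp0 : 0 < Sb j m := Sb_pos (by omega)
  have hb1 := (bounds m j hj).1
  rcases Nat.lt_or_ge (j+1) m with hlt | hge
  · -- j+2 ≤ m
    obtain ⟨u, rfl⟩ : ∃ u, m = u+j+2 := ⟨m-j-2, by omega⟩
    have hb2 := (bounds (u+j+2) (j+1) (by omega)).2
    push_cast at hb1 hb2 ⊢
    have hs1 : 0 ≤ (2*(j:ℚ)+3) * Sb (j+1) (u+j+2) - 2*((u:ℚ)+2) * Sb j (u+j+2) := by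
      linarith
    have hs2 : 0 ≤ ((u:ℚ)+1) * Sb (j+1) (u+j+2) - ((j:ℚ)+2) * Sb (j+1+1) (u+j+2) := by
      linarith
    have hp2 := Sb_nonneg (j+2) (u+j+2)
    have uq : (0:ℚ) ≤ (u:ℚ) := Nat.cast_nonneg u
    have jq : (0:ℚ) ≤ (j:ℚ) := Nat.cast_nonneg j
    have t1 : 0 ≤ ((4*((u:ℚ)+(j:ℚ)+2)+2*(j:ℚ)+7)*(2*(j:ℚ)+3))
        * (((u:ℚ)+1) * Sb (j+1) (u+j+2) - ((j:ℚ)+2) * Sb (j+1+1) (u+j+2)) * Sb (j+1) (u+j+2) :=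
      mul_nonneg (mul_nonneg (by positivity) hs2) hp1.le
    have t2 : 0 ≤ (2*((j:ℚ)+2))
        * ((2*(j:ℚ)+3) * Sb (j+1) (u+j+2) - 2*((u:ℚ)+2) * Sb j (u+j+2)) * Sb (j+1) (u+j+2) :=
      mul_nonneg (mul_nonneg (by positivity) hs1) hp1.le
    have t3 : 0 ≤ ((4*((u:ℚ)+(j:ℚ)+2)+2*(j:ℚ)+7)*((j:ℚ)+2))
        * ((2*(j:ℚ)+3) * Sb (j+1) (u+j+2) - 2*((u:ℚ)+2) * Sb j (u+j+2)) * Sb (j+1+1) (u+j+2) := by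
      have : (0:ℚ) ≤ Sb (j+1+1) (u+j+2) := Sb_nonneg _ _
      exact mul_nonneg (mul_nonneg (by positivity) hs1) this
    have tP : 0 < (4*(u:ℚ)^2+10*(u:ℚ)*(j:ℚ)+8*(j:ℚ)^2+27*(u:ℚ)+38*(j:ℚ)+47)
        * (Sb (j+1) (u+j+2) * Sb (j+1) (u+j+2)) := by
      have h1 : 0 < Sb (j+1) (u+j+2) * Sb (j+1) (u+j+2) := mul_pos hp1 hp1
      have h2 : (0:ℚ) < 4*(u:ℚ)^2+10*(u:ℚ)*(j:ℚ)+8*(j:ℚ)^2+27*(u:ℚ)+38*(j:ℚ)+47 := by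
        positivity
      exact mul_pos h2 h1
    have hc : (0:ℚ) < 2*((u:ℚ)+2)*((j:ℚ)+2) := by positivity
    nlinarith [t1, t2, t3, tP, hc]
  · -- j+1 = m
    obtain rfl : m = j+1 := by omega
    have hz : Sb (j+2) (j+1) = 0 := Sb_zero (by omega)
    rw [show j+2 = j+1+1 from rfl] at hz
    rw [hz]
    push_cast at hb1 ⊢
    have sL := mul_le_mul_of_nonneg_right hb1 hp1.le
    have jq : (0:ℚ) ≤ (j:ℚ) := Nat.cast_nonneg j
    nlinarith [sL, mul_pos hp1 hp1, mul_nonneg jq (mul_pos hp1 hp1).le]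

lemma bmd_eq_s11 (i m : ℕ) : bmd (i : ℤ) m = Sb i m / 4^m := by
  unfold bmd
  rw [if_pos (Int.natCast_nonneg i)]
  simp only [Int.toNat_natCast]
  have hz : (2:ℚ)^(-(2*(m:ℤ))) = ((4:ℚ)^m)⁻¹ := by
    rw [zpow_neg]
    congr 1
    rw [show (2*(m:ℤ)) = ((2*m : ℕ) : ℤ) from by push_cast; ring, zpow_natCast, pow_mul]
    norm_num
  rw [hz]
  rw [show (Sb i m / 4^m) = ((4:ℚ)^m)⁻¹ * Sb i m from by ring]
  congr 1
  unfold Sb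
  apply Finset.sum_congr rfl
  intro k hk
  rw [cq_of_le (Finset.mem_Icc.mp hk).2]

theorem bmd_interlacing2 (m : ℕ) (hm : 2 ≤ m) (i : ℕ) (hi1 : 1 ≤ i) (hi2 : i ≤ m) :
    bmd i m * bmd i (m + 1) > bmd ((i : ℤ) - 1) m * bmd (i + 1) (m + 1) := by
  obtain ⟨j, rfl⟩ : ∃ j, i = j+1 := ⟨i-1, by omega⟩
  have hjm : j + 1 ≤ m := hi2
  rw [show ((↑(j+1) : ℤ) - 1) = ((j:ℕ) : ℤ) from by push_cast; ring,
      show ((↑(j+1) : ℤ) + 1) = ((j+2:ℕ) : ℤ) from by push_cast; ring]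
  rw [bmd_eq_s11 (j+1) m, bmd_eq_s11 (j+1) (m+1), bmd_eq_s11 j m, bmd_eq_s11 (j+2) (m+1)]
  rw [gt_iff_lt, div_mul_div_comm, div_mul_div_comm,
    div_lt_div_iff₀ (by positivity) (by positivity)]
  have core : Sb j m * Sb (j+2) (m+1) < Sb (j+1) m * Sb (j+1) (m+1) := by
    have E1 := SbRec m j (by omega)
    have E2 := SbRec m (j+1) (by omega)
    have hQ := Qlem m j hjm
    have A : ((m:ℚ)+1)*(Sb j m * Sb (j+1+1) (m+1))
        = Sb j m * (((m:ℚ)+1) * Sb (j+1+1) (m+1)) := by ring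
    rw [E2] at A
    have B : ((m:ℚ)+1)*(Sb (j+1) m * Sb (j+1) (m+1))
        = Sb (j+1) m * (((m:ℚ)+1) * Sb (j+1) (m+1)) := by ring
    rw [E1] at B
    have hmp : (0:ℚ) < (m:ℚ)+1 := by positivity
    apply lt_of_mul_lt_mul_left ?_ hmp.le
    rw [show j+2 = j+1+1 from rfl, A, B]
    push_cast at hQ ⊢
    nlinarith [hQ]
  exact mul_lt_mul_of_pos_right core (by positivity)
end
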